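/- The convex hull of all permutations of the vector (1-m, 1, 1, ..., 1) ∈ ℝ^{m+1} equals the set of points (x₀,...,x_m) with x₀ + ... + x_m = 1 and x_i ≤ 1 for all 0 ≤ i ≤ m. -/

import Mathlib

/-!
The permutations of `(1 - m, 1, …, 1)` are the vectors
`1 - m • eⱼ`, the images of the standard basis vectors under the affine map `x ↦ 1 - m • x`.
Affine maps commute with convex hulls, and the convex hull of the basis is the standard simplex,
whose image under this map is cut out by `∑ xᵢ = 1` and `xᵢ ≤ 1`.
-/

open Finset

section

variable {ι : Type*}

theorem setOf_exists_perm_comp_ite_eq_range [DecidableEq ι] {α : Type*} (i₀ : ι) (a b : α) :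
    {w : ι → α | ∃ σ : Equiv.Perm ι, w = (fun i => if i = i₀ then a else b) ∘ σ}
      = Set.range fun j i => if j = i then a else b := by
  ext w
  constructor
  · rintro ⟨σ, rfl⟩
    exact ⟨σ.symm i₀, funext fun i => by
      simp only [Function.comp_apply, Equiv.symm_apply_eq, @eq_comm _ i₀]⟩
  · rintro ⟨j, rfl⟩
    exact ⟨Equiv.swap i₀ j, funext fun i => by
      simp only [Function.comp_apply, Equiv.swap_apply_eq_iff, Equiv.swap_apply_left, @eq_comm _ i]⟩

variable [Fintype ι]

theorem image_stdSimplex_smul_add_const {a b : ℝ} (hab : a < b) :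
    (fun x : ι → ℝ => (a - b) • x + fun _ => b) '' stdSimplex ℝ ι
      = {y | ∑ i, y i = a - b + Fintype.card ι * b ∧ ∀ i, y i ≤ b} := by
  have hab' : a - b ≠ 0 := sub_ne_zero.mpr hab.ne
  ext y
  constructor
  · rintro ⟨x, ⟨hx_nonneg, hx_sum⟩, rfl⟩
    refine ⟨?_, fun i => ?_⟩
    · simp [sum_add_distrib, ← mul_sum, hx_sum]
    · simpa using mul_nonpos_of_nonpos_of_nonneg (sub_nonpos.mpr hab.le) (hx_nonneg i)
  · rintro ⟨hy_sum, hy_le⟩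
    refine ⟨fun i => (y i - b) / (a - b), ⟨fun i => ?_, ?_⟩, ?_⟩
    · exact div_nonneg_of_nonpos (sub_nonpos.mpr (hy_le i)) (sub_nonpos.mpr hab.le)
    · rw [← sum_div, sum_sub_distrib, hy_sum, div_eq_one_iff_eq hab']
      simp
    · funext i
      simp [mul_div_cancel₀ _ hab']

theorem convexHull_range_ite_eq [DecidableEq ι] {a b : ℝ} (hab : a < b) :
    convexHull ℝ (Set.range fun j i : ι => if j = i then a else b)
      = {y | ∑ i, y i = a - b + Fintype.card ι * b ∧ ∀ i, y i ≤ b} := by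
  let f : (ι → ℝ) →ᵃ[ℝ] ι → ℝ :=
    ((a - b) • LinearMap.id).toAffineMap + AffineMap.const ℝ _ fun _ => b
  have hvertices : (Set.range fun j i : ι => if j = i then a else b)
      = f '' Set.range fun j i => if j = i then (1 : ℝ) else 0 := by
    rw [← Set.range_comp]
    congr
    funext j i
    by_cases h : j = i <;> simp [f, h]
  rw [hvertices, ← f.image_convexHull, convexHull_basis_eq_stdSimplex]
  exact image_stdSimplex_smul_add_const hab

end

theorem convexHull_permutations_eq (m : ℕ) (hm : 1 ≤ m) :
    convexHull ℝ {w : Fin (m + 1) → ℝ | ∃ σ : Equiv.Perm (Fin (m + 1)),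
        w = (fun i => if i = 0 then 1 - (m : ℝ) else 1) ∘ σ}
      = {x : Fin (m + 1) → ℝ | ∑ i, x i = 1 ∧ ∀ i, x i ≤ 1} := by
  have hm' : (1 : ℝ) - m < 1 := sub_lt_self 1 (Nat.cast_pos.mpr hm)
  have hsum : (1 : ℝ) - m - 1 + Fintype.card (Fin (m + 1)) * 1 = 1 := by
    simp only [Fintype.card_fin]
    push_cast
    ring
  rw [setOf_exists_perm_comp_ite_eq_range, convexHull_range_ite_eq hm', hsum]
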